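/- For the n-copy Heisenberg–Weyl algebra h(3n) with brackets [e_{2i}, e_{3j}] = δ_{ij} e₁ and e₁ central, the r-matrix r = Σᵢ aⁱ e_{2i}∧e_{3i} (with all aⁱ ≠ 0) induces on the dual the brackets [e^{2i}, e¹]* = aⁱ e^{2i}, [e^{3i}, e¹]* = aⁱ e^{3i}, [e^{2i}, e^{3j}]* = 0, and these brackets satisfy the Jacobi identity. -/
import Mathlib


noncomputable section

/-- `e i` is the `i`-th standard basis vector (also used for the dual basis). -/
def e {N : ℕ} (i : Fin N) : Fin N → ℂ := fun j => if j = i then 1 else 0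

/-- Bilinear bracket determined by structure constants `c`. -/
def bra {N : ℕ} (c : Fin N → Fin N → Fin N → ℂ) (x y : Fin N → ℂ) : Fin N → ℂ :=
  fun k => ∑ i, ∑ j, x i * y j * c i j k

/-- Coordinates of the cobracket `δ(x) = [x⊗1 + 1⊗x, r]`, the r-matrix having
coordinates `ρ`. -/
def cob {N : ℕ} (c : Fin N → Fin N → Fin N → ℂ) (ρ : Fin N → Fin N → ℂ) (x : Fin N → ℂ) :
    Fin N → Fin N → ℂ :=
  fun a b => ∑ i, ∑ j, ρ i j * (bra c x (e i) a * e j b + e i a * bra c x (e j) b)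

/-- The induced bracket on the dual space: `⟨[ξ,η]*, e k⟩ = ⟨ξ ⊗ η, δ(e k)⟩`. -/
def dbra {N : ℕ} (c : Fin N → Fin N → Fin N → ℂ) (ρ : Fin N → Fin N → ℂ) (ξ η : Fin N → ℂ) :
    Fin N → ℂ :=
  fun k => ∑ a, ∑ b, ξ a * η b * cob c ρ (e k) a b

/-- The index of the basis vector `e_{2i}` of `h(3n)`. -/
def idx2 {n : ℕ} (i : Fin n) : Fin (2 * n + 1) := ⟨1 + 2 * i.val, by omega⟩

/-- The index of the basis vector `e_{3i}` of `h(3n)`. -/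
def idx3 {n : ℕ} (i : Fin n) : Fin (2 * n + 1) := ⟨2 + 2 * i.val, by omega⟩

/-- Structure constants of `h(3n)`: `[e_{2i}, e_{3j}] = δ_{ij} e₁`, with `e₁` (index 0)
central and all other brackets zero. -/
def ch (n : ℕ) : Fin (2 * n + 1) → Fin (2 * n + 1) → Fin (2 * n + 1) → ℂ := fun p q k =>
  ∑ i : Fin n, (e (idx2 i) p * e (idx3 i) q - e (idx3 i) p * e (idx2 i) q) * e 0 k

/-- Coordinates of the r-matrix `r = ∑ᵢ aⁱ e_{2i} ∧ e_{3i}`. -/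
def ρh (n : ℕ) (a : Fin n → ℂ) : Fin (2 * n + 1) → Fin (2 * n + 1) → ℂ := fun p q =>
  ∑ i : Fin n, a i * (e (idx2 i) p * e (idx3 i) q - e (idx3 i) p * e (idx2 i) q)

@[simp] lemma idx2_inj {n : ℕ} {i j : Fin n} : idx2 i = idx2 j ↔ i = j := by
  simp [idx2, Fin.ext_iff]
@[simp] lemma idx3_inj {n : ℕ} {i j : Fin n} : idx3 i = idx3 j ↔ i = j := by
  simp [idx3, Fin.ext_iff]
@[simp] lemma idx2_ne_idx3 {n : ℕ} {i j : Fin n} : idx2 i ≠ idx3 j := by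
  simp [idx2, idx3, Fin.ext_iff]; omega
@[simp] lemma idx3_ne_idx2 {n : ℕ} {i j : Fin n} : idx3 i ≠ idx2 j := by
  simp [idx2, idx3, Fin.ext_iff]; omega
@[simp] lemma idx2_ne_zero {n : ℕ} {i : Fin n} : idx2 i ≠ (0 : Fin (2*n+1)) := by
  simp [idx2, Fin.ext_iff]
@[simp] lemma idx3_ne_zero {n : ℕ} {i : Fin n} : idx3 i ≠ (0 : Fin (2*n+1)) := by
  simp [idx3, Fin.ext_iff]
@[simp] lemma zero_ne_idx2 {n : ℕ} {i : Fin n} : (0 : Fin (2*n+1)) ≠ idx2 i := by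
  simp [idx2, Fin.ext_iff]; omega
@[simp] lemma zero_ne_idx3 {n : ℕ} {i : Fin n} : (0 : Fin (2*n+1)) ≠ idx3 i := by
  simp [idx3, Fin.ext_iff]; omega

@[simp] lemma e_self {N : ℕ} (i : Fin N) : e i i = 1 := by simp [e]
lemma e_apply {N : ℕ} (i j : Fin N) : e i j = if j = i then 1 else 0 := rfl

@[simp] lemma sum_ite_const {α : Type*} [Fintype α] (c : Prop) [Decidable c] (f : α → ℂ) :
    (∑ x : α, if c then f x else 0) = if c then ∑ x : α, f x else 0 := by
  split_ifs <;> simp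

lemma collapse3 {n : ℕ} (u v : Fin n → Fin (2*n+1)) (x : Fin (2*n+1) → ℂ) (m : Fin (2*n+1)) :
    (∑ x1 : Fin (2*n+1), ∑ x2 : Fin (2*n+1), ∑ x3 : Fin n,
      if x1 = u x3 then if x2 = v x3 then if x1 = m then x x2 else 0 else 0 else 0)
    = ∑ x3 : Fin n, if m = u x3 then x (v x3) else 0 := by
  have step1 : (∑ x1 : Fin (2*n+1), ∑ x2 : Fin (2*n+1), ∑ x3 : Fin n,
      if x1 = u x3 then if x2 = v x3 then if x1 = m then x x2 else 0 else 0 else 0)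
      = ∑ x1 : Fin (2*n+1), ∑ x3 : Fin n, ∑ x2 : Fin (2*n+1),
      if x1 = u x3 then if x2 = v x3 then if x1 = m then x x2 else 0 else 0 else 0 :=
    Finset.sum_congr rfl (fun x1 _ => Finset.sum_comm)
  rw [step1]
  simp only [sum_ite_const, Finset.sum_ite_eq', Finset.mem_univ, if_true]
  rw [Finset.sum_comm]
  refine Finset.sum_congr rfl fun x3 _ => ?_
  rw [Finset.sum_ite_eq' Finset.univ (u x3) (fun x1 => if x1 = m then x (v x3) else 0)]
  simp [eq_comm]

lemma bra_e {n : ℕ} (x : Fin (2*n+1) → ℂ) (m : Fin (2*n+1)) :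
    bra (ch n) x (e m) = fun l =>
      (∑ i : Fin n, (x (idx2 i) * e (idx3 i) m - x (idx3 i) * e (idx2 i) m)) * e 0 l := by
  funext l
  simp only [bra, ch, e_apply, Finset.mul_sum, Finset.sum_mul,
    mul_ite, mul_one, mul_zero, ite_mul, one_mul, zero_mul, mul_sub, sub_mul,
    Finset.sum_ite_eq, Finset.sum_ite_eq', Finset.sum_sub_distrib, Finset.mem_univ, if_true]
  rcases eq_or_ne l 0 with h|h
  · subst h
    simp only [if_true, Finset.sum_sub_distrib]
    congr 1
    · exact Finset.sum_comm.trans (collapse3 idx3 idx2 x m)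
    · exact Finset.sum_comm.trans (collapse3 idx2 idx3 x m)
  · simp [h]

lemma collapseF {n : ℕ} (u v : Fin n → Fin (2*n+1)) (g : Fin n → Fin (2*n+1) → Fin (2*n+1) → ℂ) :
    (∑ p : Fin (2*n+1), ∑ q : Fin (2*n+1), ∑ i : Fin n,
      if p = u i then if q = v i then g i p q else 0 else 0) = ∑ i, g i (u i) (v i) := by
  have step1 : (∑ p : Fin (2*n+1), ∑ q : Fin (2*n+1), ∑ i : Fin n,
      if p = u i then if q = v i then g i p q else 0 else 0)
      = ∑ p : Fin (2*n+1), ∑ i : Fin n, ∑ q : Fin (2*n+1),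
      if p = u i then if q = v i then g i p q else 0 else 0 :=
    Finset.sum_congr rfl (fun _ _ => Finset.sum_comm)
  rw [step1]
  simp only [sum_ite_const, Finset.sum_ite_eq', Finset.mem_univ, if_true]
  rw [Finset.sum_comm]
  refine Finset.sum_congr rfl fun i _ => ?_
  rw [Finset.sum_ite_eq' Finset.univ (u i) (fun p => g i p (v i))]
  simp

lemma sum_rho {n : ℕ} (a : Fin n → ℂ) (F : Fin (2*n+1) → Fin (2*n+1) → ℂ) :
    (∑ p, ∑ q, ρh n a p q * F p q)
    = ∑ i, a i * (F (idx2 i) (idx3 i) - F (idx3 i) (idx2 i)) := by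
  have key : ∀ p q, ρh n a p q * F p q =
      (∑ i : Fin n, if p = idx2 i then if q = idx3 i then a i * F p q else 0 else 0)
      - (∑ i : Fin n, if p = idx3 i then if q = idx2 i then a i * F p q else 0 else 0) := by
    intro p q
    rw [ρh, Finset.sum_mul, ← Finset.sum_sub_distrib]
    refine Finset.sum_congr rfl fun i _ => ?_
    simp only [e_apply]
    split_ifs <;> simp_all
  simp only [key, Finset.sum_sub_distrib, collapseF]
  rw [← Finset.sum_sub_distrib]
  refine Finset.sum_congr rfl fun i _ => ?_
  ring

lemma T2 {n : ℕ} (x : Fin (2*n+1) → ℂ) (i : Fin n) :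
    (∑ j : Fin n, (x (idx2 j) * e (idx3 j) (idx2 i) - x (idx3 j) * e (idx2 j) (idx2 i)))
    = -x (idx3 i) := by
  simp [e_apply, Finset.sum_ite_eq]

lemma T3 {n : ℕ} (x : Fin (2*n+1) → ℂ) (i : Fin n) :
    (∑ j : Fin n, (x (idx2 j) * e (idx3 j) (idx3 i) - x (idx3 j) * e (idx2 j) (idx3 i)))
    = x (idx2 i) := by
  simp [e_apply, Finset.sum_ite_eq]

lemma master {n : ℕ} (a : Fin n → ℂ) (ξ η : Fin (2*n+1) → ℂ) :
    dbra (ch n) (ρh n a) ξ η = fun k =>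
      (∑ i : Fin n, a i * (e (idx2 i) k + e (idx3 i) k)) * (ξ k * η 0 - ξ 0 * η k) := by
  funext k
  simp only [dbra, cob, bra_e, sum_rho, T2, T3]
  have inner : ∀ (i : Fin n) (c2 c3 : ℂ),
      (∑ α : Fin (2*n+1), ∑ β : Fin (2*n+1), ξ α * η β *
        (a i * ((-c3 * e 0 α * e (idx3 i) β + e (idx2 i) α * (c2 * e 0 β)) -
          (c2 * e 0 α * e (idx2 i) β + e (idx3 i) α * (-c3 * e 0 β)))))
      = a i * (c2 * (ξ (idx2 i) * η 0 - ξ 0 * η (idx2 i))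
          + c3 * (ξ (idx3 i) * η 0 - ξ 0 * η (idx3 i))) := by
    intro i c2 c3
    simp only [e_apply, mul_ite, ite_mul, mul_zero, zero_mul, mul_one, one_mul, mul_add,
      add_mul, mul_sub, sub_mul, neg_mul, mul_neg, Finset.sum_add_distrib,
      Finset.sum_sub_distrib, Finset.sum_neg_distrib, sum_ite_const, Finset.sum_ite_eq',
      Finset.sum_ite_eq, Finset.mem_univ, if_true]
    ring
  simp only [Finset.mul_sum]
  rw [Finset.sum_congr rfl (fun (α : Fin (2*n+1)) _ => (Finset.sum_comm :
    (∑ β : Fin (2*n+1), ∑ i : Fin n, ξ α * η β *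
      (a i * (-e k (idx3 i) * e 0 α * e (idx3 i) β + e (idx2 i) α * (e k (idx2 i) * e 0 β) -
        (e k (idx2 i) * e 0 α * e (idx2 i) β + e (idx3 i) α * (-e k (idx3 i) * e 0 β))))) = _))]
  rw [Finset.sum_comm]
  rw [Finset.sum_congr rfl (fun (i : Fin n) _ => inner i (e k (idx2 i)) (e k (idx3 i)))]
  rw [Finset.sum_mul]
  refine Finset.sum_congr rfl fun i _ => ?_
  rcases eq_or_ne k (idx2 i) with h|h
  · subst h; simp [e_apply]
  · rcases eq_or_ne k (idx3 i) with h'|h'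
    · subst h'; simp [e_apply]
    · simp [e_apply, h, h', Ne.symm h, Ne.symm h']

/-- For `h(3n)` with `[e_{2i}, e_{3j}] = δ_{ij} e₁` and `e₁` central, the r-matrix
`r = ∑ᵢ aⁱ e_{2i}∧e_{3i}` (all `aⁱ ≠ 0`) induces on the dual the brackets
`[e^{2i}, e¹]* = aⁱ e^{2i}`, `[e^{3i}, e¹]* = aⁱ e^{3i}`, `[e^{2i}, e^{3j}]* = 0`,
and the induced dual bracket satisfies the Jacobi identity. -/
theorem h3n_dual_brackets (n : ℕ) (a : Fin n → ℂ) (ha : ∀ i, a i ≠ 0) :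
    (∀ i : Fin n,
      dbra (ch n) (ρh n a) (e (idx2 i)) (e 0) = (fun k => a i * e (idx2 i) k)) ∧
    (∀ i : Fin n,
      dbra (ch n) (ρh n a) (e (idx3 i)) (e 0) = (fun k => a i * e (idx3 i) k)) ∧
    (∀ i j : Fin n, dbra (ch n) (ρh n a) (e (idx2 i)) (e (idx3 j)) = 0) ∧
    (∀ x y z : Fin (2 * n + 1) → ℂ,
      dbra (ch n) (ρh n a) x (dbra (ch n) (ρh n a) y z)
      + dbra (ch n) (ρh n a) y (dbra (ch n) (ρh n a) z x)
      + dbra (ch n) (ρh n a) z (dbra (ch n) (ρh n a) x y) = 0) := by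
  refine ⟨?_, ?_, ?_, ?_⟩
  · intro i; funext k; rw [master]
    rcases eq_or_ne k (idx2 i) with h|h
    · subst h; simp [e_apply]
    · simp [e_apply, h]
  · intro i; funext k; rw [master]
    rcases eq_or_ne k (idx3 i) with h|h
    · subst h; simp [e_apply]
    · simp [e_apply, h]
  · intro i j; funext k; rw [master]; simp [e_apply]
  · intro x y z; funext k
    have h0 : (∑ i : Fin n, a i * (e (idx2 i) (0 : Fin (2*n+1)) + e (idx3 i) 0)) = 0 := by
      simp [e_apply]
    simp only [Pi.add_apply, Pi.zero_apply, master, h0]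
    ring
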